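/- arXiv:2603.08155 — 2 statements merged into one kernel-verified Lean document; each statement's English description precedes it below -/
import Mathlib

section
/- Let n be a positive natural number, R > 0 and t > 0. Let p₀ and q₀ be probability density functions on ℝⁿ that vanish outside the closed ball of radius R centered at the origin. Define p_t(x) = ∫_{ℝⁿ} (2π(1-e^{-2t}))^{-n/2} · exp(-‖x - e^{-t}·x₀‖² / (2(1-e^{-2t}))) · p₀(x₀) dx₀ and q_t(x) analogously with q₀ in place of p₀. Then for every x ∈ ℝⁿ, ‖∇ log p_t(x) - ∇ log q_t(x)‖ ≤ 2R·e^{-t}/(1-e^{-2t}). -/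
/-!
Tweedie's formula: writing `p_t(x) = ∫ w_x(x₀) dx₀` with the Gaussian weight
`w_x(x₀) = exp (-‖x - a x₀‖² / (2s)) p₀(x₀)`, differentiation under the integral gives
`∇ log p_t(x) = (a m(x) - x) / s`, where `m(x)` is the mean of `x₀` under the normalised
weight `w_x`, i.e. the posterior mean of `x₀` given `x_t = x`. Since `w_x` vanishes outside the
ball of radius `R`, its mean lies in that ball, and the difference of two scores at `x` is
`(a / s) (m_p(x) - m_q(x))`, of norm at most `2 R a / s`.
-/

open MeasureTheory Real

noncomputable section

theorem integrable_norm_mul_of_support_subset_closedBall {E : Type*} [NormedAddCommGroup E]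
    [MeasurableSpace E] [OpensMeasurableSpace E] {μ : Measure E} {f : E → ℝ} {R : ℝ}
    (hf : 0 ≤ f) (hfi : Integrable f μ) (hfR : Function.support f ⊆ Metric.closedBall 0 R) :
    Integrable (fun x₀ => ‖x₀‖ * f x₀) μ := by
  refine (hfi.const_mul R).mono' (continuous_norm.aestronglyMeasurable.mul hfi.1)
    (.of_forall fun x₀ => ?_)
  rw [norm_of_nonneg (mul_nonneg (norm_nonneg x₀) (hf x₀))]
  by_cases hx₀ : x₀ ∈ Metric.closedBall (0 : E) R
  · exact mul_le_mul_of_nonneg_right (mem_closedBall_zero_iff.mp hx₀) (hf x₀)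
  · simp [Function.support_subset_iff'.mp hfR x₀ hx₀]

section GaussianSmoothing

variable {E : Type*} [NormedAddCommGroup E] [InnerProductSpace ℝ E] {s a R : ℝ} {f : E → ℝ}

def gaussianWeight (s a : ℝ) (f : E → ℝ) (y x₀ : E) : ℝ :=
  exp (-‖y - a • x₀‖ ^ 2 / (2 * s)) * f x₀

theorem gaussianWeight_nonneg (hf : 0 ≤ f) (y x₀ : E) : 0 ≤ gaussianWeight s a f y x₀ :=
  mul_nonneg (exp_pos _).le (hf x₀)

theorem gaussianWeight_le (hs : 0 ≤ s) (hf : 0 ≤ f) (y x₀ : E) :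
    gaussianWeight s a f y x₀ ≤ f x₀ := by
  refine mul_le_of_le_one_left (hf x₀) (exp_le_one_iff.mpr ?_)
  exact div_nonpos_of_nonpos_of_nonneg (neg_nonpos.mpr (sq_nonneg _)) (by positivity)

theorem support_gaussianWeight (y : E) :
    Function.support (gaussianWeight s a f y) = Function.support f := by
  ext x₀
  simp [gaussianWeight, (exp_pos _).ne']

theorem norm_gaussianWeight_div_smul_le (hs : 0 ≤ s) (hf : 0 ≤ f) (y x₀ : E) :
    ‖(gaussianWeight s a f y x₀ / s) • (a • x₀ - y)‖ ≤ s⁻¹ * (f x₀ * (|a| * ‖x₀‖ + ‖y‖)) := by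
  rw [norm_smul, norm_of_nonneg (div_nonneg (gaussianWeight_nonneg hf y x₀) hs), div_eq_inv_mul,
    mul_assoc]
  gcongr s⁻¹ * ?_
  refine mul_le_mul (gaussianWeight_le hs hf y x₀) ?_ (norm_nonneg _) (hf x₀)
  calc ‖a • x₀ - y‖ ≤ ‖a • x₀‖ + ‖y‖ := norm_sub_le _ _
    _ = |a| * ‖x₀‖ + ‖y‖ := by rw [norm_smul, Real.norm_eq_abs]

section Measure

variable [MeasurableSpace E] [BorelSpace E] {μ : Measure E}

def gaussianSmoothing (μ : Measure E) (s a : ℝ) (f : E → ℝ) (y : E) : ℝ :=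
  ∫ x₀, gaussianWeight s a f y x₀ ∂μ

def posteriorMean (μ : Measure E) (s a : ℝ) (f : E → ℝ) (y : E) : E :=
  (gaussianSmoothing μ s a f y)⁻¹ • ∫ x₀, gaussianWeight s a f y x₀ • x₀ ∂μ

theorem aestronglyMeasurable_gaussianWeight (hf : AEStronglyMeasurable f μ) (y : E) :
    AEStronglyMeasurable (gaussianWeight s a f y) μ :=
  (Continuous.aestronglyMeasurable (by fun_prop)).mul hf

theorem integrable_gaussianWeight (hs : 0 ≤ s) (hf : 0 ≤ f) (hfi : Integrable f μ) (y : E) :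
    Integrable (gaussianWeight s a f y) μ :=
  hfi.mono' (aestronglyMeasurable_gaussianWeight hfi.1 y) (.of_forall fun x₀ => by
    rw [norm_of_nonneg (gaussianWeight_nonneg hf y x₀)]
    exact gaussianWeight_le hs hf y x₀)

theorem integrable_gaussianWeight_smul [SecondCountableTopology E] (hs : 0 ≤ s) (hf : 0 ≤ f)
    (hfi : Integrable f μ) (hfm : Integrable (fun x₀ => ‖x₀‖ * f x₀) μ) (y : E) :
    Integrable (fun x₀ => gaussianWeight s a f y x₀ • x₀) μ := by
  refine hfm.mono' ((aestronglyMeasurable_gaussianWeight hfi.1 y).smul aestronglyMeasurable_id)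
    (.of_forall fun x₀ => ?_)
  rw [norm_smul, norm_of_nonneg (gaussianWeight_nonneg hf y x₀), mul_comm]
  exact mul_le_mul_of_nonneg_left (gaussianWeight_le hs hf y x₀) (norm_nonneg x₀)

theorem gaussianSmoothing_pos (hs : 0 ≤ s) (hf : 0 ≤ f) (hfi : Integrable f μ)
    (hpos : 0 < ∫ x₀, f x₀ ∂μ) (y : E) : 0 < gaussianSmoothing μ s a f y := by
  rw [gaussianSmoothing, integral_pos_iff_support_of_nonneg (gaussianWeight_nonneg hf y)
    (integrable_gaussianWeight hs hf hfi y), support_gaussianWeight]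
  exact (integral_pos_iff_support_of_nonneg hf hfi).mp hpos

theorem norm_posteriorMean_le (hs : 0 ≤ s) (hf : 0 ≤ f) (hfi : Integrable f μ)
    (hfR : Function.support f ⊆ Metric.closedBall 0 R) (hpos : 0 < ∫ x₀, f x₀ ∂μ) (y : E) :
    ‖posteriorMean μ s a f y‖ ≤ R := by
  have hP := gaussianSmoothing_pos (a := a) hs hf hfi hpos y
  have hmoment : ‖∫ x₀, gaussianWeight s a f y x₀ • x₀ ∂μ‖ ≤ R * gaussianSmoothing μ s a f y := by
    rw [gaussianSmoothing, ← integral_const_mul]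
    refine norm_integral_le_of_norm_le ((integrable_gaussianWeight hs hf hfi y).const_mul R)
      (.of_forall fun x₀ => ?_)
    rw [norm_smul, norm_of_nonneg (gaussianWeight_nonneg hf y x₀), mul_comm]
    by_cases hx₀ : x₀ ∈ Metric.closedBall (0 : E) R
    · exact mul_le_mul_of_nonneg_right (mem_closedBall_zero_iff.mp hx₀)
        (gaussianWeight_nonneg hf y x₀)
    · simp [gaussianWeight, Function.support_subset_iff'.mp hfR x₀ hx₀]
  rw [posteriorMean, norm_smul, norm_inv, norm_of_nonneg hP.le, inv_mul_le_iff₀ hP, mul_comm]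
  exact hmoment

end Measure

variable [CompleteSpace E]

theorem hasGradientAt_exp_neg_norm_sub_sq_div (s : ℝ) (v x : E) :
    HasGradientAt (fun y => exp (-‖y - v‖ ^ 2 / (2 * s)))
      ((exp (-‖x - v‖ ^ 2 / (2 * s)) / s) • (v - x)) x := by
  rw [hasGradientAt_iff_hasFDerivAt]
  have h := (((hasFDerivAt_id x).sub_const v).norm_sq.neg.mul_const (2 * s)⁻¹).exp
  refine h.congr_fderiv (ContinuousLinearMap.ext fun u => ?_)
  simp only [Pi.neg_apply, id, smul_apply, neg_apply, ContinuousLinearMap.comp_apply,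
    ContinuousLinearMap.id_apply, InnerProductSpace.toDual_apply_apply, innerSL_apply_apply,
    smul_eq_mul, nsmul_eq_mul, real_inner_smul_left, ← neg_sub x v, inner_neg_left, div_eq_mul_inv]
  ring

theorem hasGradientAt_gaussianWeight (s a : ℝ) (f : E → ℝ) (x x₀ : E) :
    HasGradientAt (fun y => gaussianWeight s a f y x₀)
      ((gaussianWeight s a f x x₀ / s) • (a • x₀ - x)) x := by
  rw [hasGradientAt_iff_hasFDerivAt]
  refine ((hasGradientAt_exp_neg_norm_sub_sq_div s (a • x₀) x).hasFDerivAt.mul_const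
    (f x₀)).congr_fderiv (ContinuousLinearMap.ext fun u => ?_)
  simp only [gaussianWeight, smul_apply, InnerProductSpace.toDual_apply_apply,
    real_inner_smul_left, smul_eq_mul]
  ring

variable [MeasurableSpace E] [BorelSpace E] [SecondCountableTopology E] {μ : Measure E}

theorem integral_gaussianWeight_div_smul (hs : 0 ≤ s) (hf : 0 ≤ f) (hfi : Integrable f μ)
    (hfm : Integrable (fun x₀ => ‖x₀‖ * f x₀) μ) (x : E) :
    ∫ x₀, (gaussianWeight s a f x x₀ / s) • (a • x₀ - x) ∂μ
      = s⁻¹ • (a • ∫ x₀, gaussianWeight s a f x x₀ • x₀ ∂μ - gaussianSmoothing μ s a f x • x) := by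
  have hsplit : ∀ x₀, (gaussianWeight s a f x x₀ / s) • (a • x₀ - x)
      = s⁻¹ • (a • (gaussianWeight s a f x x₀ • x₀) - gaussianWeight s a f x x₀ • x) :=
    fun x₀ => by rw [div_eq_inv_mul]; module
  simp_rw [hsplit]
  rw [integral_smul, integral_sub ((integrable_gaussianWeight_smul hs hf hfi hfm x).fun_smul a)
    ((integrable_gaussianWeight hs hf hfi x).smul_const x), integral_smul, integral_smul_const,
    gaussianSmoothing]

theorem hasGradientAt_gaussianSmoothing (hs : 0 < s) (hf : 0 ≤ f) (hfi : Integrable f μ)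
    (hfm : Integrable (fun x₀ => ‖x₀‖ * f x₀) μ) (x : E) :
    HasGradientAt (gaussianSmoothing μ s a f)
      (s⁻¹ • (a • ∫ x₀, gaussianWeight s a f x x₀ • x₀ ∂μ - gaussianSmoothing μ s a f x • x))
      x := by
  set G : E → E → E := fun y x₀ => (gaussianWeight s a f y x₀ / s) • (a • x₀ - y)
  have hG_meas : AEStronglyMeasurable (G x) μ := by
    have := aestronglyMeasurable_gaussianWeight (s := s) (a := a) hfi.1 x
    fun_prop
  have hG_le : ∀ x₀, ∀ y ∈ Metric.ball x 1,
      ‖G y x₀‖ ≤ s⁻¹ * (|a| * (‖x₀‖ * f x₀) + (‖x‖ + 1) * f x₀) := by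
    intro x₀ y hy
    have hy' : ‖y‖ ≤ ‖x‖ + 1 := by
      have := norm_le_norm_add_norm_sub' y x
      rw [Metric.mem_ball, dist_eq_norm] at hy
      linarith
    calc ‖G y x₀‖ ≤ s⁻¹ * (f x₀ * (|a| * ‖x₀‖ + ‖y‖)) :=
          norm_gaussianWeight_div_smul_le hs.le hf y x₀
      _ ≤ s⁻¹ * (f x₀ * (|a| * ‖x₀‖ + (‖x‖ + 1))) := by gcongr; exact hf x₀
      _ = s⁻¹ * (|a| * (‖x₀‖ * f x₀) + (‖x‖ + 1) * f x₀) := by ring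
  have hbound : Integrable (fun x₀ => s⁻¹ * (|a| * (‖x₀‖ * f x₀) + (‖x‖ + 1) * f x₀)) μ :=
    ((hfm.const_mul |a|).add (hfi.const_mul (‖x‖ + 1))).const_mul s⁻¹
  have hG_int : Integrable (G x) μ :=
    hbound.mono' hG_meas (.of_forall fun x₀ => hG_le x₀ x (Metric.mem_ball_self one_pos))
  have hderiv : HasFDerivAt (gaussianSmoothing μ s a f) (∫ x₀, innerSL ℝ (G x x₀) ∂μ) x :=
    hasFDerivAt_integral_of_dominated_of_fderiv_le (Metric.ball_mem_nhds x one_pos)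
      (.of_forall fun y => aestronglyMeasurable_gaussianWeight hfi.1 y)
      (integrable_gaussianWeight hs.le hf hfi x)
      ((innerSL ℝ).continuous.comp_aestronglyMeasurable hG_meas)
      (.of_forall fun x₀ y hy => (innerSL_apply_norm ℝ (G y x₀)).trans_le (hG_le x₀ y hy))
      hbound (.of_forall fun x₀ y _ => (hasGradientAt_gaussianWeight s a f y x₀).hasFDerivAt)
  rw [hasGradientAt_iff_hasFDerivAt, ← integral_gaussianWeight_div_smul hs.le hf hfi hfm x]
  rwa [(innerSL ℝ).integral_comp_comm hG_int] at hderiv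

theorem hasGradientAt_log_gaussianSmoothing (hs : 0 < s) (hf : 0 ≤ f) (hfi : Integrable f μ)
    (hfm : Integrable (fun x₀ => ‖x₀‖ * f x₀) μ) (hpos : 0 < ∫ x₀, f x₀ ∂μ) (x : E) :
    HasGradientAt (fun y => log (gaussianSmoothing μ s a f y))
      (s⁻¹ • (a • posteriorMean μ s a f x - x)) x := by
  have hP := gaussianSmoothing_pos (a := a) hs.le hf hfi hpos x
  have hscore : s⁻¹ • (a • posteriorMean μ s a f x - x) = (gaussianSmoothing μ s a f x)⁻¹ •
      s⁻¹ • (a • ∫ x₀, gaussianWeight s a f x x₀ • x₀ ∂μ - gaussianSmoothing μ s a f x • x) := by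
    rw [posteriorMean]
    match_scalars <;> field_simp
  rw [hasGradientAt_iff_hasFDerivAt, hscore, map_smulₛₗ, starRingEnd_apply, star_trivial]
  exact (hasGradientAt_gaussianSmoothing hs hf hfi hfm x).hasFDerivAt.log hP.ne'

theorem norm_gradient_log_gaussianSmoothing_sub_le (hs : 0 < s) {g : E → ℝ}
    (hf : 0 ≤ f) (hfi : Integrable f μ) (hfR : Function.support f ⊆ Metric.closedBall 0 R)
    (hfpos : 0 < ∫ x₀, f x₀ ∂μ)
    (hg : 0 ≤ g) (hgi : Integrable g μ) (hgR : Function.support g ⊆ Metric.closedBall 0 R)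
    (hgpos : 0 < ∫ x₀, g x₀ ∂μ) (x : E) :
    ‖gradient (fun y => log (gaussianSmoothing μ s a f y)) x
        - gradient (fun y => log (gaussianSmoothing μ s a g y)) x‖ ≤ 2 * R * |a| / s := by
  rw [(hasGradientAt_log_gaussianSmoothing hs hf hfi
      (integrable_norm_mul_of_support_subset_closedBall hf hfi hfR) hfpos x).gradient,
    (hasGradientAt_log_gaussianSmoothing hs hg hgi
      (integrable_norm_mul_of_support_subset_closedBall hg hgi hgR) hgpos x).gradient,
    show ∀ m₁ m₂ : E, s⁻¹ • (a • m₁ - x) - s⁻¹ • (a • m₂ - x) = (s⁻¹ * a) • (m₁ - m₂)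
      from fun _ _ => by module, norm_smul, norm_mul, norm_inv, norm_of_nonneg hs.le,
    Real.norm_eq_abs]
  calc s⁻¹ * |a| * ‖posteriorMean μ s a f x - posteriorMean μ s a g x‖
      ≤ s⁻¹ * |a| * (R + R) := by
        gcongr
        exact (norm_sub_le _ _).trans (add_le_add (norm_posteriorMean_le hs.le hf hfi hfR hfpos x)
          (norm_posteriorMean_le hs.le hg hgi hgR hgpos x))
    _ = 2 * R * |a| / s := by ring

end GaussianSmoothing

theorem ou_score_mse_bound_general
    (n : ℕ) (R t : ℝ) (ht : 0 < t)
    (p₀ q₀ : EuclideanSpace ℝ (Fin n) → ℝ)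
    (hp₀nonneg : ∀ x, 0 ≤ p₀ x) (hq₀nonneg : ∀ x, 0 ≤ q₀ x)
    (hp₀int : Integrable p₀) (hq₀int : Integrable q₀)
    (hp₀one : ∫ x, p₀ x = 1) (hq₀one : ∫ x, q₀ x = 1)
    (hp₀supp : ∀ x, x ∉ Metric.closedBall (0 : EuclideanSpace ℝ (Fin n)) R → p₀ x = 0)
    (hq₀supp : ∀ x, x ∉ Metric.closedBall (0 : EuclideanSpace ℝ (Fin n)) R → q₀ x = 0)
    (pt qt : EuclideanSpace ℝ (Fin n) → ℝ)
    (hpt : ∀ x, pt x =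
      ∫ x₀, (2 * π * (1 - Real.exp (-2 * t))) ^ (-(n : ℝ) / 2) *
        Real.exp (-‖x - Real.exp (-t) • x₀‖ ^ 2 / (2 * (1 - Real.exp (-2 * t)))) * p₀ x₀)
    (hqt : ∀ x, qt x =
      ∫ x₀, (2 * π * (1 - Real.exp (-2 * t))) ^ (-(n : ℝ) / 2) *
        Real.exp (-‖x - Real.exp (-t) • x₀‖ ^ 2 / (2 * (1 - Real.exp (-2 * t)))) * q₀ x₀) :
    ∀ x : EuclideanSpace ℝ (Fin n),
      ‖gradient (fun y => Real.log (pt y)) x - gradient (fun y => Real.log (qt y)) x‖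
        ≤ 2 * R * Real.exp (-t) / (1 - Real.exp (-2 * t)) := by
  intro x
  set s := 1 - exp (-2 * t)
  set C := (2 * π * s) ^ (-(n : ℝ) / 2)
  have hs : 0 < s := sub_pos.mpr (exp_lt_one_iff.mpr (by linarith))
  have hC : 0 < C := rpow_pos_of_pos (by positivity) _
  have hsmoothing : ∀ p₀ p : EuclideanSpace ℝ (Fin n) → ℝ,
      (∀ x, p x = ∫ x₀, C * exp (-‖x - exp (-t) • x₀‖ ^ 2 / (2 * s)) * p₀ x₀) →
      p = gaussianSmoothing volume s (exp (-t)) (fun x₀ => C * p₀ x₀) :=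
    fun p₀ p hp => funext fun y => (hp y).trans
      (integral_congr_ae (.of_forall fun x₀ => by simp only [gaussianWeight]; ring))
  rw [hsmoothing p₀ pt hpt, hsmoothing q₀ qt hqt]
  refine (norm_gradient_log_gaussianSmoothing_sub_le hs
    (fun x₀ => mul_nonneg hC.le (hp₀nonneg x₀)) (hp₀int.const_mul C)
    ((Function.support_mul_subset_right _ _).trans (Function.support_subset_iff'.mpr hp₀supp))
    (by rw [integral_const_mul, hp₀one, mul_one]; exact hC)
    (fun x₀ => mul_nonneg hC.le (hq₀nonneg x₀)) (hq₀int.const_mul C)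
    ((Function.support_mul_subset_right _ _).trans (Function.support_subset_iff'.mpr hq₀supp))
    (by rw [integral_const_mul, hq₀one, mul_one]; exact hC) x).trans_eq ?_
  rw [abs_of_pos (exp_pos _)]

/-- score MSE bound for the time-reparameterized Ornstein–Uhlenbeck process
(paper's Theorem 1 specialized to `a = e^{-t}`, `s = 1 - e^{-2t}`):
the score difference of the two marginals is bounded by `2R e^{-t} / (1 - e^{-2t})`. -/
theorem ou_score_mse_bound
    (n : ℕ) (hn : 0 < n) (R t : ℝ) (hR : 0 < R) (ht : 0 < t)
    (p₀ q₀ : EuclideanSpace ℝ (Fin n) → ℝ)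
    (hp₀nonneg : ∀ x, 0 ≤ p₀ x) (hq₀nonneg : ∀ x, 0 ≤ q₀ x)
    (hp₀int : Integrable p₀) (hq₀int : Integrable q₀)
    (hp₀one : ∫ x, p₀ x = 1) (hq₀one : ∫ x, q₀ x = 1)
    (hp₀supp : ∀ x, x ∉ Metric.closedBall (0 : EuclideanSpace ℝ (Fin n)) R → p₀ x = 0)
    (hq₀supp : ∀ x, x ∉ Metric.closedBall (0 : EuclideanSpace ℝ (Fin n)) R → q₀ x = 0)
    (pt qt : EuclideanSpace ℝ (Fin n) → ℝ)
    (hpt : ∀ x, pt x =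
      ∫ x₀, (2 * π * (1 - Real.exp (-2 * t))) ^ (-(n : ℝ) / 2) *
        Real.exp (-‖x - Real.exp (-t) • x₀‖ ^ 2 / (2 * (1 - Real.exp (-2 * t)))) * p₀ x₀)
    (hqt : ∀ x, qt x =
      ∫ x₀, (2 * π * (1 - Real.exp (-2 * t))) ^ (-(n : ℝ) / 2) *
        Real.exp (-‖x - Real.exp (-t) • x₀‖ ^ 2 / (2 * (1 - Real.exp (-2 * t)))) * q₀ x₀) :
    ∀ x : EuclideanSpace ℝ (Fin n),
      ‖gradient (fun y => Real.log (pt y)) x - gradient (fun y => Real.log (qt y)) x‖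
        ≤ 2 * R * Real.exp (-t) / (1 - Real.exp (-2 * t)) :=
  ou_score_mse_bound_general n R t ht p₀ q₀ hp₀nonneg hq₀nonneg hp₀int hq₀int hp₀one hq₀one hp₀supp
    hq₀supp pt qt hpt hqt
end
end

section
/- Let n be a positive natural number, R > 0 and t > 0, and write s_t = 1 - e^{-2t}. Let p₀ and q₀ be probability density functions on ℝⁿ that vanish outside the closed ball of radius R centered at the origin, and define p_t(x) = ∫_{ℝⁿ} (2π s_t)^{-n/2} · exp( -‖x - e^{-t}x₀‖²/(2 s_t) ) · p₀(x₀) dx₀ and q_t analogously with q₀ in place of p₀. Then the relative Fisher information satisfies I(p_t ‖ q_t) = ∫_{ℝⁿ} p_t(x) · ‖∇ log p_t(x) - ∇ log q_t(x)‖² dx ≤ 4R² · e^{-2t}/(1 - e^{-2t})². -/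
/-!
The OU marginal `p_t` is a Gaussian mixture of the kernels `𝒩(e^{-t} x₀, s I)`, `s = 1 - e^{-2t}`.
Differentiating under the integral gives Tweedie's formula
`s ∇log p_t(x) + x = e^{-t} 𝔼[x₀ | x_t = x]`, and the posterior mean lies in the ball of radius `R`
because `p₀` does. So the two scores differ by at most `2 R e^{-t} / s` everywhere, and integrating
the square of this bound against the probability density `p_t` gives the claim.
-/

open MeasureTheory Real InnerProductSpace Module

lemma mul_exp_neg_sq_div_le_sqrt {s r : ℝ} (hs : 0 < s) :
    r * exp (-r ^ 2 / (2 * s)) ≤ √s := by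
  have ha : 0 < √s := sqrt_pos.2 hs
  have hlin : r ≤ √s * (1 + r ^ 2 / (2 * s)) := by
    rw [show 1 + r ^ 2 / (2 * s) = (2 * s + r ^ 2) / (2 * s) by field_simp, mul_div_assoc',
      le_div_iff₀ (by positivity)]
    nlinarith [mul_nonneg ha.le (sq_nonneg (r - √s)), sq_sqrt hs.le]
  calc r * exp (-r ^ 2 / (2 * s))
      ≤ √s * (1 + r ^ 2 / (2 * s)) * exp (-(r ^ 2 / (2 * s))) := by
        rw [neg_div]; gcongr
    _ ≤ √s * exp (r ^ 2 / (2 * s)) * exp (-(r ^ 2 / (2 * s))) := by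
        gcongr; linarith [add_one_le_exp (r ^ 2 / (2 * s))]
    _ = √s := by rw [mul_assoc, ← exp_add, add_neg_cancel, exp_zero, mul_one]

variable {V : Type*} [NormedAddCommGroup V] [InnerProductSpace ℝ V]

theorem HasGradientAt.log [CompleteSpace V] {f : V → ℝ} {f' x : V} (hf : HasGradientAt f f' x)
    (hx : f x ≠ 0) : HasGradientAt (fun y => Real.log (f y)) ((f x)⁻¹ • f') x := by
  rw [hasGradientAt_iff_hasFDerivAt, _root_.map_smul]
  exact (hasGradientAt_iff_hasFDerivAt.1 hf).log hx

/-- The Ornstein–Uhlenbeck transition density over time `t`, for `s = 1 - e^{-2t}` and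
`ε = e^{-t}`: the density at `x` of `𝒩(ε x₀, s I)`. -/
noncomputable def ouKernel (s ε : ℝ) (x x₀ : V) : ℝ :=
  (2 * π * s) ^ (-(finrank ℝ V : ℝ) / 2) * exp (-‖x - ε • x₀‖ ^ 2 / (2 * s))

lemma hasGradientAt_ouKernel [CompleteSpace V] (s ε : ℝ) (x₀ x : V) :
    HasGradientAt (ouKernel s ε · x₀) ((s⁻¹ * ouKernel s ε x x₀) • (ε • x₀ - x)) x := by
  set c := (2 * π * s) ^ (-(finrank ℝ V : ℝ) / 2)
  have hfun : (ouKernel s ε · x₀) = fun y => c * exp (-(2 * s)⁻¹ * ‖y - ε • x₀‖ ^ 2) := by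
    funext y; simp only [ouKernel, c]; ring_nf
  rw [hasGradientAt_iff_hasFDerivAt, hfun]
  refine (((hasFDerivAt_id x).sub_const (ε • x₀)).norm_sq.const_mul _).exp.const_mul c
    |>.congr_fderiv ?_
  ext v
  simp only [map_sub, map_smul, ContinuousLinearMap.comp_id, smul_apply, sub_apply,
    coe_innerSL_apply, smul_eq_mul, id_eq, nsmul_eq_mul, ouKernel, toDual_apply_apply, c]
  ring_nf

section Kernel

variable {s ε : ℝ}

lemma ouKernel_pos (hs : 0 < s) (x x₀ : V) : 0 < ouKernel s ε x x₀ := by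
  unfold ouKernel; positivity

lemma ouKernel_le (hs : 0 < s) (x x₀ : V) :
    ouKernel s ε x x₀ ≤ (2 * π * s) ^ (-(finrank ℝ V : ℝ) / 2) := by
  unfold ouKernel
  refine mul_le_of_le_one_right (by positivity) (exp_le_one_iff.2 ?_)
  rw [neg_div]
  exact neg_nonpos.2 (by positivity)

lemma continuous_ouKernel : Continuous fun z : V × V => ouKernel s ε z.1 z.2 := by
  unfold ouKernel; fun_prop

lemma norm_ouKernel_smul_sub_le (hs : 0 < s) (x x₀ : V) :
    ‖(s⁻¹ * ouKernel s ε x x₀) • (ε • x₀ - x)‖ ≤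
      s⁻¹ * (2 * π * s) ^ (-(finrank ℝ V : ℝ) / 2) * √s := by
  have hk := ouKernel_pos hs x x₀ (ε := ε)
  calc ‖(s⁻¹ * ouKernel s ε x x₀) • (ε • x₀ - x)‖
      = s⁻¹ * (2 * π * s) ^ (-(finrank ℝ V : ℝ) / 2) *
          (‖x - ε • x₀‖ * exp (-‖x - ε • x₀‖ ^ 2 / (2 * s))) := by
        rw [norm_smul, norm_of_nonneg (by positivity), norm_sub_rev, ouKernel]; ring
    _ ≤ s⁻¹ * (2 * π * s) ^ (-(finrank ℝ V : ℝ) / 2) * √s := by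
        gcongr; exact mul_exp_neg_sq_div_le_sqrt hs

end Kernel

lemma norm_smul_self_le_of_support_subset {w : V → ℝ} {R : ℝ} (hw0 : 0 ≤ w)
    (hw : Function.support w ⊆ Metric.closedBall 0 R) (x : V) : ‖w x • x‖ ≤ R * w x := by
  by_cases hx : x ∈ Function.support w
  · rw [norm_smul, norm_of_nonneg (hw0 x), mul_comm]
    exact mul_le_mul_of_nonneg_right (mem_closedBall_zero_iff.1 (hw hx)) (hw0 x)
  · simp [Function.notMem_support.1 hx]

section Integral

variable [MeasurableSpace V] [BorelSpace V] {μ : Measure V} {f : V → ℝ} {s ε : ℝ}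

lemma integrable_ouKernel_mul (hs : 0 < s) (hf : Integrable f μ) (x : V) :
    Integrable (fun x₀ => ouKernel s ε x x₀ * f x₀) μ :=
  hf.bdd_mul (continuous_ouKernel.comp (Continuous.prodMk_right x)).aestronglyMeasurable
    (.of_forall fun x₀ => by
      rw [norm_of_nonneg (ouKernel_pos hs x x₀).le]; exact ouKernel_le hs x x₀)

lemma integral_ouKernel_mul_pos (hs : 0 < s) (hf0 : 0 ≤ f) (hf : Integrable f μ)
    (hpos : 0 < ∫ x, f x ∂μ) (x : V) : 0 < ∫ x₀, ouKernel s ε x x₀ * f x₀ ∂μ := by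
  have hsupp : Function.support (fun x₀ => ouKernel s ε x x₀ * f x₀) = Function.support f := by
    ext x₀; simp [(ouKernel_pos hs x x₀).ne']
  rw [integral_pos_iff_support_of_nonneg_ae (.of_forall fun x₀ => ?_)
    (integrable_ouKernel_mul hs hf x), hsupp]
  · exact (integral_pos_iff_support_of_nonneg_ae (.of_forall hf0) hf).1 hpos
  · exact mul_nonneg (ouKernel_pos hs x x₀).le (hf0 x₀)

variable [FiniteDimensional ℝ V]

lemma hasGradientAt_integral_ouKernel_mul (hs : 0 < s) (hf : Integrable f μ) (x : V) :
    HasGradientAt (fun y => ∫ x₀, ouKernel s ε y x₀ * f x₀ ∂μ)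
      (s⁻¹ • ∫ x₀, (ouKernel s ε x x₀ * f x₀) • (ε • x₀ - x) ∂μ) x := by
  set g : V → V → V := fun y x₀ => f x₀ • (s⁻¹ * ouKernel s ε y x₀) • (ε • x₀ - y)
  set M := s⁻¹ * (2 * π * s) ^ (-(finrank ℝ V : ℝ) / 2) * √s
  have hg_le : ∀ y x₀, ‖g y x₀‖ ≤ M * ‖f x₀‖ := fun y x₀ => by
    rw [norm_smul, mul_comm]
    exact mul_le_mul_of_nonneg_right (norm_ouKernel_smul_sub_le hs y x₀) (norm_nonneg _)
  have hg_meas : AEStronglyMeasurable (g x) μ :=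
    hf.1.smul (Continuous.aestronglyMeasurable (by unfold ouKernel; fun_prop))
  have hg_int : Integrable (g x) μ :=
    (hf.norm.const_mul M).mono' hg_meas (.of_forall (hg_le x))
  have hF := hasFDerivAt_integral_of_dominated_of_fderiv_le (μ := μ) (x₀ := x)
    (F' := fun y x₀ => toDual ℝ V (g y x₀)) (bound := fun x₀ => M * ‖f x₀‖) Filter.univ_mem
    (.of_forall fun y => (integrable_ouKernel_mul hs hf y).1) (integrable_ouKernel_mul hs hf x)
    ((toDual ℝ V).continuous.comp_aestronglyMeasurable hg_meas)
    (.of_forall fun x₀ y _ => by rw [LinearIsometryEquiv.norm_map]; exact hg_le y x₀)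
    (hf.norm.const_mul M)
    (.of_forall fun x₀ y _ => by
      simpa only [g, _root_.map_smul, mul_comm (f x₀)]
        using (hasGradientAt_ouKernel s ε x₀ y).hasFDerivAt.const_mul (f x₀))
  have hcomm : ∫ x₀, toDual ℝ V (g x x₀) ∂μ = toDual ℝ V (∫ x₀, g x x₀ ∂μ) :=
    ContinuousLinearMap.integral_comp_commSL (by simp)
      (toDual ℝ V).toContinuousLinearEquiv.toContinuousLinearMap hg_int
  rw [hcomm] at hF
  convert hasGradientAt_iff_hasFDerivAt.2 hF using 1
  rw [← integral_smul]
  congr 1 with x₀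
  simp only [g, smul_smul]
  ring_nf

theorem norm_smul_gradient_log_integral_ouKernel_mul_add_le (hs : 0 < s) (hf0 : 0 ≤ f)
    (hf : Integrable f μ) (hpos : 0 < ∫ x, f x ∂μ) {R : ℝ}
    (hsupp : Function.support f ⊆ Metric.closedBall 0 R) (x : V) :
    ‖s • gradient (fun y => Real.log (∫ x₀, ouKernel s ε y x₀ * f x₀ ∂μ)) x + x‖ ≤ |ε| * R := by
  set w := fun x₀ => ouKernel s ε x x₀ * f x₀
  have hw0 : 0 ≤ w := fun x₀ => mul_nonneg (ouKernel_pos hs x x₀).le (hf0 x₀)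
  have hw : Integrable w μ := integrable_ouKernel_mul hs hf x
  have hwsupp : Function.support w ⊆ Metric.closedBall 0 R :=
    (Function.support_mul_subset_right _ _).trans hsupp
  have hw_le := norm_smul_self_le_of_support_subset hw0 hwsupp
  have hwx : Integrable (fun x₀ => w x₀ • x₀) μ :=
    (hw.const_mul R).mono' (hw.1.smul continuous_id.aestronglyMeasurable) (.of_forall hw_le)
  have hZ : 0 < ∫ x₀, w x₀ ∂μ := integral_ouKernel_mul_pos hs hf0 hf hpos x
  -- Tweedie's formula: `w / ∫ w` is the posterior density of `x₀` given `x`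
  have hscore : s • gradient (fun y => Real.log (∫ x₀, ouKernel s ε y x₀ * f x₀ ∂μ)) x + x =
      ((∫ x₀, w x₀ ∂μ)⁻¹ * ε) • ∫ x₀, w x₀ • x₀ ∂μ := by
    rw [((hasGradientAt_integral_ouKernel_mul hs hf x).log hZ.ne').gradient]
    simp_rw [smul_sub, smul_comm _ ε]
    rw [integral_sub (f := fun x₀ => ε • w x₀ • x₀) (hwx.smul ε) (hw.smul_const x), integral_smul,
      integral_smul_const]
    change s • (∫ x₀, w x₀ ∂μ)⁻¹ • _ + x = _
    match_scalars
    · field_simp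
    · field_simp; ring
  calc ‖s • gradient (fun y => Real.log (∫ x₀, ouKernel s ε y x₀ * f x₀ ∂μ)) x + x‖
      = (∫ x₀, w x₀ ∂μ)⁻¹ * |ε| * ‖∫ x₀, w x₀ • x₀ ∂μ‖ := by
        rw [hscore, norm_smul, norm_mul, norm_inv, norm_of_nonneg hZ.le, norm_eq_abs]
    _ ≤ (∫ x₀, w x₀ ∂μ)⁻¹ * |ε| * (R * ∫ x₀, w x₀ ∂μ) := by
        gcongr
        rw [← integral_const_mul]
        exact norm_integral_le_of_norm_le (hw.const_mul R) (.of_forall hw_le)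
    _ = |ε| * R := by field_simp

end Integral

section Mass

variable [FiniteDimensional ℝ V] [MeasurableSpace V] [BorelSpace V] {f : V → ℝ} {s ε : ℝ}

lemma integral_ouKernel_left (hs : 0 < s) (x₀ : V) : ∫ x, ouKernel s ε x x₀ = 1 := by
  have hgauss : ∫ v : V, exp (-‖v‖ ^ 2 / (2 * s)) = (2 * π * s) ^ ((finrank ℝ V : ℝ) / 2) := by
    convert GaussianFourier.integral_rexp_neg_mul_sq_norm (V := V) (b := (2 * s)⁻¹) (by positivity)
      using 2
    · ext v; ring_nf
    · field_simp
  simp only [ouKernel]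
  rw [integral_const_mul,
    integral_sub_right_eq_self (fun v => exp (-‖v‖ ^ 2 / (2 * s))) (ε • x₀), hgauss, neg_div,
    rpow_neg (by positivity), inv_mul_cancel₀ (by positivity)]

lemma integrable_ouKernel_left (hs : 0 < s) (x₀ : V) : Integrable (ouKernel s ε · x₀) :=
  .of_integral_ne_zero (by rw [integral_ouKernel_left hs]; exact one_ne_zero)

lemma integrable_ouKernel_mul_prod (hs : 0 < s) (hf : Integrable f) :
    Integrable (fun z : V × V => ouKernel s ε z.1 z.2 * f z.2) (volume.prod volume) := by
  rw [integrable_prod_iff' (f := fun z : V × V => ouKernel s ε z.1 z.2 * f z.2)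
    (continuous_ouKernel.aestronglyMeasurable.mul hf.1.comp_snd)]
  refine ⟨.of_forall fun x₀ => (integrable_ouKernel_left hs x₀).mul_const (f x₀), ?_⟩
  simp_rw [norm_mul, norm_of_nonneg (ouKernel_pos hs _ _).le, integral_mul_const,
    integral_ouKernel_left hs, one_mul]
  exact hf.norm

lemma integral_integral_ouKernel_mul (hs : 0 < s) (hf : Integrable f) :
    ∫ x, ∫ x₀, ouKernel s ε x x₀ * f x₀ = ∫ x₀, f x₀ := by
  rw [integral_integral_swap (integrable_ouKernel_mul_prod hs hf)]
  simp_rw [integral_mul_const, integral_ouKernel_left hs, one_mul]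

end Mass

lemma norm_sub_le_of_norm_smul_add_le {E : Type*} [NormedAddCommGroup E] [NormedSpace ℝ E]
    {a b x : E} {s r : ℝ} (hs : 0 < s) (ha : ‖s • a + x‖ ≤ r) (hb : ‖s • b + x‖ ≤ r) :
    ‖a - b‖ ≤ s⁻¹ * (2 * r) := by
  have hab : a - b = s⁻¹ • ((s • a + x) - (s • b + x)) := by
    rw [add_sub_add_right_eq_sub, ← smul_sub, inv_smul_smul₀ hs.ne']
  rw [hab, norm_smul, norm_inv, norm_of_nonneg hs.le, two_mul]
  gcongr
  exact (norm_sub_le _ _).trans (add_le_add ha hb)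

lemma integral_mul_norm_sq_le {X E : Type*} [MeasurableSpace X] [NormedAddCommGroup E]
    {μ : Measure X} {ρ : X → ℝ} {v : X → E} {C : ℝ} (hρ0 : 0 ≤ ρ) (hρ : Integrable ρ μ)
    (hv : ∀ x, ‖v x‖ ≤ C) : ∫ x, ρ x * ‖v x‖ ^ 2 ∂μ ≤ C ^ 2 * ∫ x, ρ x ∂μ := by
  rw [← integral_const_mul]
  refine integral_mono_of_nonneg (.of_forall fun x => mul_nonneg (hρ0 x) (by positivity))
    (hρ.const_mul _) (.of_forall fun x => ?_)
  change ρ x * ‖v x‖ ^ 2 ≤ C ^ 2 * ρ x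
  rw [mul_comm (C ^ 2)]
  gcongr
  · exact hρ0 x
  · exact hv x

theorem ou_fisher_information_bound_general
    (n : ℕ) (R t : ℝ) (ht : 0 < t)
    (p₀ q₀ : EuclideanSpace ℝ (Fin n) → ℝ)
    (hp₀nonneg : ∀ x, 0 ≤ p₀ x) (hq₀nonneg : ∀ x, 0 ≤ q₀ x)
    (hp₀int : Integrable p₀) (hq₀int : Integrable q₀)
    (hp₀one : ∫ x, p₀ x = 1) (hq₀one : ∫ x, q₀ x = 1)
    (hp₀supp : ∀ x, x ∉ Metric.closedBall (0 : EuclideanSpace ℝ (Fin n)) R → p₀ x = 0)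
    (hq₀supp : ∀ x, x ∉ Metric.closedBall (0 : EuclideanSpace ℝ (Fin n)) R → q₀ x = 0)
    (pt qt : EuclideanSpace ℝ (Fin n) → ℝ)
    (hpt : ∀ x, pt x =
      ∫ x₀, (2 * π * (1 - Real.exp (-2 * t))) ^ (-(n : ℝ) / 2) *
        Real.exp (-‖x - Real.exp (-t) • x₀‖ ^ 2 / (2 * (1 - Real.exp (-2 * t)))) * p₀ x₀)
    (hqt : ∀ x, qt x =
      ∫ x₀, (2 * π * (1 - Real.exp (-2 * t))) ^ (-(n : ℝ) / 2) *
        Real.exp (-‖x - Real.exp (-t) • x₀‖ ^ 2 / (2 * (1 - Real.exp (-2 * t)))) * q₀ x₀) :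
    (∫ x, pt x *
        ‖gradient (fun y => Real.log (pt y)) x
          - gradient (fun y => Real.log (qt y)) x‖ ^ 2)
      ≤ 4 * R ^ 2 * Real.exp (-2 * t) / (1 - Real.exp (-2 * t)) ^ 2 := by
  set s := 1 - exp (-2 * t)
  set ε := exp (-t)
  have hs : 0 < s := sub_pos.2 (exp_lt_one_iff.2 (by linarith))
  obtain rfl : pt = fun x => ∫ x₀, ouKernel s ε x x₀ * p₀ x₀ := by
    ext x; simp only [hpt, ouKernel, finrank_euclideanSpace_fin]
  obtain rfl : qt = fun x => ∫ x₀, ouKernel s ε x x₀ * q₀ x₀ := by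
    ext x; simp only [hqt, ouKernel, finrank_euclideanSpace_fin]
  have hscore (f : EuclideanSpace ℝ (Fin n) → ℝ) (hf0 : ∀ x, 0 ≤ f x) (hf : Integrable f)
      (hf1 : ∫ x, f x = 1) (hsupp : ∀ x, x ∉ Metric.closedBall 0 R → f x = 0)
      (x : EuclideanSpace ℝ (Fin n)) :
      ‖s • gradient (fun y => Real.log (∫ x₀, ouKernel s ε y x₀ * f x₀)) x + x‖ ≤ ε * R := by
    have h := norm_smul_gradient_log_integral_ouKernel_mul_add_le (ε := ε) hs hf0 hf
      (by rw [hf1]; exact one_pos) (Function.support_subset_iff'.2 hsupp) x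
    rwa [abs_of_pos (exp_pos (-t))] at h
  calc _ ≤ (s⁻¹ * (2 * (ε * R))) ^ 2 * ∫ x, ∫ x₀, ouKernel s ε x x₀ * p₀ x₀ :=
        integral_mul_norm_sq_le
          (fun x => integral_nonneg fun x₀ => mul_nonneg (ouKernel_pos hs x x₀).le (hp₀nonneg x₀))
          (integrable_ouKernel_mul_prod hs hp₀int).integral_prod_left
          fun x => norm_sub_le_of_norm_smul_add_le hs
            (hscore p₀ hp₀nonneg hp₀int hp₀one hp₀supp x)
            (hscore q₀ hq₀nonneg hq₀int hq₀one hq₀supp x)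
    _ = 4 * R ^ 2 * ε ^ 2 / s ^ 2 := by
        rw [integral_integral_ouKernel_mul hs hp₀int, hp₀one]; field_simp; ring
    _ = _ := by rw [← exp_nat_mul]; ring_nf

/-- Fisher-information bound for the Ornstein–Uhlenbeck process
(used in the paper's Theorem 13): for the OU marginals `p_t, q_t` of two initial
densities supported in the closed ball of radius `R`,
`I(p_t ‖ q_t) = ∫ p_t ‖∇log p_t - ∇log q_t‖² ≤ 4R² e^{-2t}/(1 - e^{-2t})²`. -/
theorem ou_fisher_information_bound
    (n : ℕ) (hn : 0 < n) (R t : ℝ) (hR : 0 < R) (ht : 0 < t)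
    (p₀ q₀ : EuclideanSpace ℝ (Fin n) → ℝ)
    (hp₀nonneg : ∀ x, 0 ≤ p₀ x) (hq₀nonneg : ∀ x, 0 ≤ q₀ x)
    (hp₀int : Integrable p₀) (hq₀int : Integrable q₀)
    (hp₀one : ∫ x, p₀ x = 1) (hq₀one : ∫ x, q₀ x = 1)
    (hp₀supp : ∀ x, x ∉ Metric.closedBall (0 : EuclideanSpace ℝ (Fin n)) R → p₀ x = 0)
    (hq₀supp : ∀ x, x ∉ Metric.closedBall (0 : EuclideanSpace ℝ (Fin n)) R → q₀ x = 0)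
    (pt qt : EuclideanSpace ℝ (Fin n) → ℝ)
    (hpt : ∀ x, pt x =
      ∫ x₀, (2 * π * (1 - Real.exp (-2 * t))) ^ (-(n : ℝ) / 2) *
        Real.exp (-‖x - Real.exp (-t) • x₀‖ ^ 2 / (2 * (1 - Real.exp (-2 * t)))) * p₀ x₀)
    (hqt : ∀ x, qt x =
      ∫ x₀, (2 * π * (1 - Real.exp (-2 * t))) ^ (-(n : ℝ) / 2) *
        Real.exp (-‖x - Real.exp (-t) • x₀‖ ^ 2 / (2 * (1 - Real.exp (-2 * t)))) * q₀ x₀) :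
    (∫ x, pt x *
        ‖gradient (fun y => Real.log (pt y)) x
          - gradient (fun y => Real.log (qt y)) x‖ ^ 2)
      ≤ 4 * R ^ 2 * Real.exp (-2 * t) / (1 - Real.exp (-2 * t)) ^ 2 :=
  ou_fisher_information_bound_general n R t ht p₀ q₀ hp₀nonneg hq₀nonneg hp₀int hq₀int hp₀one hq₀one
    hp₀supp hq₀supp pt qt hpt hqt
end
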